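/- Fix k ≥ 1 and Σ = {a,b}. Let S = Σ^{≤k} be the set of nonempty words over Σ of length at most k, with product u·v defined as the prefix of length min(|u|+|v|, k) of the concatenation uv (so that the elements of length exactly k are right-absorbing, and they are exactly the idempotents of S). Let φ: Σ⁺ → S be the semigroup morphism with φ(x) = x for x ∈ Σ (i.e., φ(w) is the prefix of w of length min(|w|,k)). Then there is no φ-weakly-good deterministic automaton with (k−1)-look-ahead, whereas there is a φ-weakly-good deterministic automaton with k-look-ahead. -/

import Mathlib

theorem take_append_take_left {α : Type} (l l' : List α) (k : ℕ) :
    (l.take k ++ l').take k = (l ++ l').take k := by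
  rw [List.take_append, List.take_append, List.take_take,
    List.length_take]
  have h1 : k ⊓ k = k := min_self k
  have h2 : k - k ⊓ l.length = k - l.length := by omega
  rw [h1, h2]

theorem take_append_take_right {α : Type} (l l' : List α) (k : ℕ) :
    (l ++ l'.take k).take k = (l ++ l').take k := by
  rw [List.take_append, List.take_append, List.take_take]
  have h : (k - l.length) ⊓ k = k - l.length := min_eq_left (Nat.sub_le _ _)
  rw [h]

/-- The semigroup `S = Σ^{≤k}` of nonempty words of length at most `k` over
`Σ = {a,b} = Bool`; `u * v` is the prefix of length `min(|u|+|v|, k)` of `uv`,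
so elements of length `k` are right-absorbing and are exactly the idempotents. -/
def Sk (k : ℕ) : Type := {w : List Bool // w ≠ [] ∧ w.length ≤ k}

instance (k : ℕ) [NeZero k] : Mul (Sk k) :=
  ⟨fun u v =>
    ⟨(u.val ++ v.val).take k, by
      have hk : 0 < k := Nat.pos_of_ne_zero (NeZero.ne k)
      have hu := u.property.1
      constructor
      · intro h
        rcases List.take_eq_nil_iff.mp h with h | h
        · omega
        · exact hu (List.append_eq_nil_iff.mp h).1
      · rw [List.length_take]; exact min_le_left _ _⟩⟩

instance (k : ℕ) [NeZero k] : Semigroup (Sk k) where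
  mul_assoc u v w := by
    apply Subtype.ext
    show ((u.val ++ v.val).take k ++ w.val).take k
        = (u.val ++ (v.val ++ w.val).take k).take k
    rw [take_append_take_left, take_append_take_right, List.append_assoc]

/-- A deterministic automaton with `m`-look-ahead: the transition function
reads the current letter together with the word formed by the (at most `m`)
following letters. -/
structure LAuto (A : Type) (m : ℕ) where
  Q : Type
  fin : Fintype Q
  lin : LinearOrder Q
  δ : Q → A → {v : List A // v.length ≤ m} → Q
  init : Q
  final : Set Q
  rep : Set Q

namespace LAuto

variable {A : Type} {m : ℕ} (M : LAuto A m)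

/-- The strict order on states. -/
def slt (p q : M.Q) : Prop := M.lin.lt p q

/-- The unique run on a finite word: `runF w i` is the state after reading the
first `i` letters, the look-ahead at letter `i` being the next
`min(m, |w| - i - 1)` letters. -/
def runF (w : List A) : ℕ → M.Q
  | 0 => M.init
  | i + 1 =>
    if h : i < w.length then
      M.δ (runF w i) (w.get ⟨i, h⟩)
        ⟨(w.drop (i + 1)).take m, by rw [List.length_take]; exact min_le_left _ _⟩
    else runF w i

/-- The unique run on an infinite word, with look-ahead the next `m` letters. -/
def runI (w : ℕ → A) : ℕ → M.Q
  | 0 => M.init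
  | i + 1 =>
    M.δ (runI w i) (w i) ⟨(List.range m).map fun t => w (i + 1 + t), by simp⟩

def AcceptsFin (w : List A) : Prop := M.runF w w.length ∈ M.final

def AcceptsInf (w : ℕ → A) : Prop := ∀ n, ∃ j, n ≤ j ∧ M.runI w j ∈ M.rep

/-- `L_q`: nonempty words `v` such that, within the unique run of `M` on some
finite or infinite word, some portion labeled `v` starts and ends at `q` with
all intermediate states strictly below `q`. -/
def Lq (q : M.Q) : Set (List A) :=
  {v | v ≠ [] ∧
    ((∃ (w : List A) (i : ℕ), i + v.length ≤ w.length ∧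
        (w.drop i).take v.length = v ∧
        M.runF w i = q ∧ M.runF w (i + v.length) = q ∧
        ∀ j, i < j → j < i + v.length → M.slt (M.runF w j) q) ∨
     (∃ (w : ℕ → A) (i : ℕ),
        ((List.range v.length).map fun t => w (i + t)) = v ∧
        M.runI w i = q ∧ M.runI w (i + v.length) = q ∧
        ∀ j, i < j → j < i + v.length → M.slt (M.runI w j) q))}

/-- `φ`-weakly-good look-ahead automaton: (G1) every finite or infinite word
is accepted; (G2) each `L_q` is mapped by `φ` to a single idempotent;
(G3) the initial state has no incoming transitions and is maximal. -/
def WeaklyGood {S : Type} [Semigroup S] (φ : List A → S) : Prop :=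
  ((∀ w : List A, w ≠ [] → M.AcceptsFin w) ∧ (∀ w : ℕ → A, M.AcceptsInf w)) ∧
  (∀ q : M.Q, ∃ e : S, e * e = e ∧ ∀ v ∈ M.Lq q, φ v = e) ∧
  ((∀ p a v, M.δ p a v ≠ M.init) ∧ ∀ q : M.Q, q ≠ M.init → M.slt q M.init)

end LAuto

/-- The morphism `φ : Σ⁺ → Σ^{≤k}` sending a nonempty word to its prefix of
length `min(|w|, k)` (it maps each letter to itself); the value on `[]` is a
junk value. -/
def phiK (k : ℕ) [NeZero k] (w : List Bool) : Sk k :=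
  if h : w = [] then
    ⟨[true], by simp, by
      simpa using Nat.one_le_iff_ne_zero.mpr (NeZero.ne k)⟩
  else
    ⟨w.take k, by
      constructor
      · intro hnil
        rcases List.take_eq_nil_iff.mp hnil with h' | h'
        · exact absurd h' (NeZero.ne k)
        · exact h h'
      · rw [List.length_take]; exact min_le_left _ _⟩

/-!
Lower bound: with look-ahead `m < k`, the state reached after `i` letters depends only on the
letters before `i + m`, so an adversary may choose letter `i + m` as a function of that state.
Let `q` be maximal among the states visited infinitely often; between two consecutive late visits
to `q` the run stays below `q`, so the factor `v` read in between lies in `L_q` and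
`φ v = e_q`. Idempotents have length `k`, hence `|v| ≥ k` and `v[m] = e_q[m]`; the adversary
defeats this by playing the negation of `e_q[m]` at time `i + m` whenever the run is in `q` at
time `i`.

Upper bound: with look-ahead `k`, let the state after `i ≥ 1` letters record `i mod k` and the
next `k` letters. A loop at a state then has length divisible by `k`, hence at least `k`, and starts
with the `k` letters stored in that state, so `φ` is constant on `L_q`, with idempotent value.
-/

namespace Sk

variable {k : ℕ} [NeZero k]

lemma val_mul (u v : Sk k) : (u * v).val = (u.val ++ v.val).take k := rfl

lemma mul_self_eq_self_iff (u : Sk k) : u * u = u ↔ u.val.length = k := by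
  have hpos : 0 < u.val.length := List.length_pos_iff.mpr u.property.1
  constructor
  · intro h
    have := congrArg (fun x : Sk k => x.val.length) h
    simp only [val_mul, List.length_take, List.length_append] at this
    have := u.property.2
    omega
  · intro h
    exact Subtype.ext (by rw [val_mul, List.take_left' h])

end Sk

lemma phiK_val {k : ℕ} [NeZero k] {v : List Bool} (hv : v ≠ []) :
    (phiK k v).val = v.take k := by
  simp [phiK, hv]

lemma phiK_mul_self {k : ℕ} [NeZero k] {v : List Bool} (hv : k ≤ v.length) :
    phiK k v * phiK k v = phiK k v := by
  have hne : v ≠ [] := List.ne_nil_of_length_pos (by have := NeZero.pos k; omega)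
  rw [Sk.mul_self_eq_self_iff, phiK_val hne, List.length_take]
  omega

lemma exists_loop_strictly_below {Q : Type*} [LinearOrder Q] [Finite Q] (r : ℕ → Q) :
    ∃ i n, 0 < n ∧ r (i + n) = r i ∧ ∀ j, i < j → j < i + n → r j < r i := by
  classical
  set T := {q | ∃ᶠ i in Filter.atTop, r i = q}
  have hT : T.Nonempty := by
    obtain ⟨q, hq⟩ := Finite.exists_infinite_fiber r
    exact ⟨q, Nat.frequently_atTop_iff_infinite.mpr (Set.infinite_coe_iff.mp hq)⟩
  obtain ⟨q, hqT, hqmax⟩ := T.toFinite.exists_maximal hT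
  have hbelow : ∀ᶠ i in Filter.atTop, r i ≤ q := by
    have : ∀ᶠ i in Filter.atTop, ∀ p, q < p → r i ≠ p := by
      refine Filter.eventually_all.mpr fun p => ?_
      by_cases hp : q < p
      · have hpT : p ∉ T := fun hpT => hp.not_ge (hqmax hpT hp.le)
        exact (Filter.not_frequently.mp hpT).mono fun i hi _ => hi
      · exact Filter.Eventually.of_forall fun i h => absurd h hp
    exact this.mono fun i hi => not_lt.mp fun h => hi _ h rfl
  obtain ⟨N, hN⟩ := Filter.eventually_atTop.mp hbelow
  obtain ⟨i, hiN, hi⟩ := Filter.frequently_atTop.mp hqT N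
  have hret : ∃ n, 0 < n ∧ r (i + n) = q := by
    obtain ⟨j, hj, hjq⟩ := Filter.frequently_atTop.mp hqT (i + 1)
    exact ⟨j - i, by omega, by rwa [Nat.add_sub_cancel' (by omega)]⟩
  refine ⟨i, Nat.find hret, (Nat.find_spec hret).1, by rw [(Nat.find_spec hret).2, hi], ?_⟩
  intro j hij hjn
  have hne : r j ≠ q := fun h => Nat.find_min hret (show j - i < Nat.find hret by omega)
    ⟨by omega, by rwa [Nat.add_sub_cancel' hij.le]⟩
  exact hi ▸ lt_of_le_of_ne (hN j (by omega)) hne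

namespace LAuto

variable {A : Type} {m : ℕ} (M : LAuto A m)

lemma runF_range_map_eq_runI (w : ℕ → A) {L i : ℕ} (h : i + m ≤ L) :
    M.runF ((List.range L).map w) i = M.runI w i := by
  induction i with
  | zero => rfl
  | succ i ih =>
    rw [runF, dif_pos (by simp; omega), ih (by omega), runI]
    congr 2
    · simp
    · exact List.ext_getElem (by simp; omega) fun n _ _ => by simp

lemma exists_runF_of_mem_Lq {q : M.Q} {v : List A} (hv : v ∈ M.Lq q) :
    ∃ (w : List A) (i : ℕ), i + v.length ≤ w.length ∧ (w.drop i).take v.length = v ∧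
      M.runF w i = q ∧ M.runF w (i + v.length) = q := by
  rcases hv with ⟨-, ⟨w, i, hlen, hw, hq, hq', -⟩ | ⟨w, i, hw, hq, hq', -⟩⟩
  · exact ⟨w, i, hlen, hw, hq, hq'⟩
  · refine ⟨(List.range (i + v.length + m)).map w, i, by simp, ?_, ?_, ?_⟩
    · rw [← hw]
      exact List.ext_getElem (by simp; omega) fun n _ _ => by simp
    · rw [M.runF_range_map_eq_runI w (by omega), hq]
    · rw [M.runF_range_map_eq_runI w (by omega), hq']

lemma range_map_mem_Lq_of_runI (w : ℕ → A) {i n : ℕ} (hn : 0 < n)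
    (hret : M.runI w (i + n) = M.runI w i)
    (hbelow : ∀ j, i < j → j < i + n → M.slt (M.runI w j) (M.runI w i)) :
    (List.range n).map (fun t => w (i + t)) ∈ M.Lq (M.runI w i) :=
  ⟨by simpa using hn.ne',
    Or.inr ⟨w, i, by simp, rfl, by simpa using hret, by simpa using hbelow⟩⟩

section Feedback

variable [Inhabited A] (g : M.Q → A)

-- Well-founded because the transition into state `i + 1` reads letters up to `i + m` only.
mutual
def feedbackRun : ℕ → M.Q
  | 0 => M.init
  | i + 1 => M.δ (feedbackRun i) (feedbackWord i)
      ⟨List.ofFn fun t : Fin m => feedbackWord (i + 1 + t), by simp⟩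
  termination_by i => 2 * i
  decreasing_by all_goals simp_wf <;> omega

def feedbackWord : ℕ → A
  | j => if m ≤ j then g (feedbackRun (j - m)) else default
  termination_by j => 2 * (j - m) + 1
  decreasing_by omega
end

lemma runI_feedbackWord (i : ℕ) : M.runI (feedbackWord M g) i = feedbackRun M g i := by
  induction i with
  | zero => rw [feedbackRun]; rfl
  | succ i ih =>
    rw [runI, ih, feedbackRun]
    congr 2
    exact List.ext_getElem (by simp) fun n _ _ => by simp

lemma exists_word_add_lookahead_eq_runI : ∃ w : ℕ → A, ∀ i, w (i + m) = g (M.runI w i) :=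
  ⟨feedbackWord M g, fun i => by
    rw [runI_feedbackWord, feedbackWord, if_pos (Nat.le_add_left m i), Nat.add_sub_cancel]⟩

end Feedback

end LAuto

theorem not_weaklyGood_phiK_of_lt {k m : ℕ} [NeZero k] (hm : m < k) (M : LAuto Bool m) :
    ¬ M.WeaklyGood (phiK k) := by
  rintro ⟨-, hgood, -⟩
  let := M.fin
  let := M.lin
  choose e he_idem he using hgood
  obtain ⟨w, hw⟩ := M.exists_word_add_lookahead_eq_runI fun q => !(e q).val.getD m true
  obtain ⟨i, n, hn, hret, hbelow⟩ := exists_loop_strictly_below (M.runI w)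
  have hflip := hw i
  set q := M.runI w i
  set v := (List.range n).map fun t => w (i + t)
  have hvne : v ≠ [] := by simpa [v] using hn.ne'
  have hv : (e q).val = v.take k := by
    rw [← he q v (M.range_map_mem_Lq_of_runI w hn hret hbelow), phiK_val hvne]
  have hkn : k ≤ n := by
    have := (Sk.mul_self_eq_self_iff _).mp (he_idem q)
    simp only [hv, List.length_take, v, List.length_map, List.length_range] at this
    omega
  have hletter : (e q).val.getD m true = w (i + m) := by
    simp [hv, v, hm, show m < n by omega]
  rw [hflip] at hletter
  simp at hletter

section WindowAutomaton

variable (A : Type) (k : ℕ)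

abbrev WindowState : Type := WithTop (ZMod k × {v : List A // v.length ≤ k})

variable {A k}

def WindowState.counter : WindowState A k → ZMod k
  | none => 0
  | some x => x.1

def WindowState.window : WindowState A k → List A
  | none => []
  | some x => x.2.val

variable (A k) [Finite A] [NeZero k]

instance : Finite {v : List A // v.length ≤ k} := (List.finite_length_le A k).to_subtype

-- Only the maximality of the initial state `⊤` matters, so any linear order on the others
-- will do.
noncomputable abbrev windowOrder : LinearOrder (ZMod k × {v : List A // v.length ≤ k}) :=
  IsWellOrder.linearOrder WellOrderingRel

noncomputable def windowAuto : LAuto A k where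
  Q := WindowState A k
  fin := Fintype.ofFinite _
  lin := @WithTop.linearOrder _ (windowOrder A k)
  δ p _ v := WithTop.some (p.counter + 1, v)
  init := ⊤
  final := Set.univ
  rep := Set.univ

variable {A k}

lemma counter_runF_windowAuto (w : List A) {i : ℕ} (hi : i ≤ w.length) :
    ((windowAuto A k).runF w i).counter = i := by
  induction i with
  | zero => exact Nat.cast_zero.symm
  | succ i ih =>
    rw [LAuto.runF, dif_pos (by omega)]
    change ((windowAuto A k).runF w i).counter + 1 = _
    rw [ih (by omega), Nat.cast_succ]

lemma runF_windowAuto (w : List A) {i : ℕ} (hi₀ : 0 < i) (hi : i ≤ w.length) :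
    (windowAuto A k).runF w i =
      WithTop.some ((i : ZMod k), ⟨(w.drop i).take k, List.length_take_le _ _⟩) := by
  obtain ⟨j, rfl⟩ := Nat.exists_eq_add_one_of_ne_zero hi₀.ne'
  rw [LAuto.runF, dif_pos (by omega)]
  change WithTop.some (((windowAuto A k).runF w j).counter + 1, _) = _
  rw [counter_runF_windowAuto w (by omega), Nat.cast_succ]

lemma le_length_and_take_eq_window_of_mem_Lq {q : WindowState A k} {v : List A}
    (hv : v ∈ (windowAuto A k).Lq q) : k ≤ v.length ∧ v.take k = q.window := by
  have hpos : 0 < v.length := List.length_pos_iff.mpr hv.1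
  obtain ⟨w, i, hlen, hw, hq, hq'⟩ := (windowAuto A k).exists_runF_of_mem_Lq hv
  have hi : 0 < i := by
    by_contra h0
    obtain rfl : i = 0 := by omega
    rw [Nat.zero_add] at hlen hq'
    rw [runF_windowAuto w hpos hlen] at hq'
    exact WithTop.coe_ne_top (hq'.trans hq.symm)
  have hstate := hq.trans hq'.symm
  rw [runF_windowAuto w hi (by omega), runF_windowAuto w (by omega) hlen] at hstate
  have hcount : (i : ZMod k) = ((i + v.length : ℕ) : ZMod k) :=
    congrArg WindowState.counter hstate
  push_cast at hcount
  have hk : k ≤ v.length :=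
    Nat.le_of_dvd hpos ((ZMod.natCast_eq_zero_iff _ _).mp (left_eq_add.mp hcount))
  refine ⟨hk, ?_⟩
  rw [← hq, runF_windowAuto w hi (by omega)]
  change v.take k = (w.drop i).take k
  rw [← hw, List.take_take, min_eq_left hk]

end WindowAutomaton

theorem weaklyGood_windowAuto (k : ℕ) [NeZero k] : (windowAuto Bool k).WeaklyGood (phiK k) := by
  -- The padding makes `e_q` idempotent for every `q`; states with `L_q ≠ ∅` have full windows.
  refine ⟨⟨fun _ _ => Set.mem_univ _, fun _ n => ⟨n, le_rfl, Set.mem_univ _⟩⟩,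
    fun q => ⟨phiK k (q.window ++ List.replicate k true), phiK_mul_self (by simp),
      fun v hv => ?_⟩,
    fun _ _ _ => WithTop.coe_ne_top,
    fun _ hq => let := windowOrder Bool k; WithTop.lt_top_iff_ne_top.mpr hq⟩
  obtain ⟨hk, hwindow⟩ := le_length_and_take_eq_window_of_mem_Lq hv
  apply Subtype.ext
  rw [phiK_val hv.1, phiK_val (by simp [NeZero.ne k]), ← hwindow, take_append_take_left,
    List.take_append_of_le_length hk]

/-- **Look-ahead lower bound.** For the morphism `φ : Σ⁺ → Σ^{≤k}`, there is
no `φ`-weakly-good deterministic automaton with `(k-1)`-look-ahead, whereas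
there is a `φ`-weakly-good deterministic automaton with `k`-look-ahead. -/
theorem no_weaklyGood_with_small_lookahead (k : ℕ) [NeZero k] :
    (¬ ∃ M : LAuto Bool (k - 1), M.WeaklyGood (phiK k)) ∧
    (∃ M : LAuto Bool k, M.WeaklyGood (phiK k)) :=
  ⟨fun ⟨M, hM⟩ => not_weaklyGood_phiK_of_lt (Nat.sub_one_lt (NeZero.ne k)) M hM,
    ⟨windowAuto Bool k, weaklyGood_windowAuto k⟩⟩
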